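/- arXiv:1911.10855 — 7 statements merged into one kernel-verified Lean document; each statement's English description precedes it below -/
import Mathlib

section
/- Let Ĝ be a group, G a normal subgroup, and φ a Ĝ-invariant homogeneous quasimorphism on G. If x ∈ G can be written as a product of m elements each of the form [ĝ, g] with ĝ ∈ Ĝ and g ∈ G, then |φ(x)| ≤ (2m - 1)·D(φ). -/
open scoped commutatorElement

/-!
A `(Ĝ,G)`-commutator `⁅a, g⁆ = (a * g * a⁻¹) * g⁻¹` is a product of two elements of `G` on which
`φ` takes opposite values, by invariance and homogeneity; hence `|φ ⁅a, g⁆| ≤ D`. Multiplying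
`m` such elements adds at most `(m - 1) D` more.
-/

section Quasimorphism

variable {G : Type*} [Group G] {H : Subgroup G} {φ : G → ℝ} {D : ℝ}

theorem map_inv_of_homogeneous (hhom : ∀ g ∈ H, ∀ n : ℤ, φ (g ^ n) = n * φ g)
    {g : G} (hg : g ∈ H) : φ g⁻¹ = -φ g := by
  simpa using hhom g hg (-1)

theorem abs_map_mul_le (hq : ∀ g h : G, g ∈ H → h ∈ H → |φ (g * h) - φ g - φ h| ≤ D)
    {g h : G} (hg : g ∈ H) (hh : h ∈ H) : |φ (g * h)| ≤ |φ g| + |φ h| + D := by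
  calc |φ (g * h)| = |(φ (g * h) - φ g - φ h) + φ g + φ h| := by ring_nf
    _ ≤ |φ (g * h) - φ g - φ h| + |φ g| + |φ h| := abs_add_three _ _ _
    _ ≤ |φ g| + |φ h| + D := by linarith [hq g h hg hh]

theorem abs_map_commutatorElement_le [H.Normal]
    (hq : ∀ g h : G, g ∈ H → h ∈ H → |φ (g * h) - φ g - φ h| ≤ D)
    (hhom : ∀ g ∈ H, ∀ n : ℤ, φ (g ^ n) = n * φ g)
    (hinv : ∀ (a : G), ∀ g ∈ H, φ (a * g * a⁻¹) = φ g)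
    (a : G) {g : G} (hg : g ∈ H) : |φ ⁅a, g⁆| ≤ D := by
  have hconj : a * g * a⁻¹ ∈ H := ‹H.Normal›.conj_mem g hg a
  have := hq _ _ hconj (H.inv_mem hg)
  rwa [hinv a g hg, map_inv_of_homogeneous hhom hg, sub_neg_eq_add, sub_add_cancel,
    ← commutatorElement_def] at this

theorem abs_map_list_prod_le (hq : ∀ g h : G, g ∈ H → h ∈ H → |φ (g * h) - φ g - φ h| ≤ D)
    {B : ℝ} {l : List G} (hl : l ≠ []) (hH : ∀ c ∈ l, c ∈ H) (hB : ∀ c ∈ l, |φ c| ≤ B) :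
    |φ l.prod| ≤ l.length * B + (l.length - 1) * D := by
  induction l with
  | nil => contradiction
  | cons c t ih =>
    rcases eq_or_ne t [] with rfl | ht
    · simpa using hB c List.mem_cons_self
    · have htail := ih ht (fun c hc => hH c (List.mem_cons_of_mem _ hc))
        (fun c hc => hB c (List.mem_cons_of_mem _ hc))
      have hmul := abs_map_mul_le hq (hH c List.mem_cons_self)
        (H.list_prod_mem fun c hc => hH c (List.mem_cons_of_mem _ hc))
      have hc := hB c List.mem_cons_self
      simp only [List.prod_cons, List.length_cons, Nat.cast_succ]
      linarith

end Quasimorphism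

/-- If `x` is a product of `m` `(Ĝ,G)`-commutators, then `|φ x| ≤ (2m-1) D(φ)` for any
`Ĝ`-invariant homogeneous quasimorphism `φ` on `G`. -/
theorem abs_le_of_prod_mixed_commutators
    {Ghat : Type*} [Group Ghat] (G : Subgroup Ghat) [G.Normal]
    (φ : Ghat → ℝ) (D : ℝ)
    (hq : ∀ g h : Ghat, g ∈ G → h ∈ G → |φ (g * h) - φ g - φ h| ≤ D)
    (hhom : ∀ g ∈ G, ∀ n : ℤ, φ (g ^ n) = n * φ g)
    (hinv : ∀ (a : Ghat), ∀ g ∈ G, φ (a * g * a⁻¹) = φ g)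
    (m : ℕ) (hm : 1 ≤ m) (a b : Fin m → Ghat) (hb : ∀ i, b i ∈ G)
    (x : Ghat) (hx : x = (List.ofFn fun i => ⁅a i, b i⁆).prod) :
    |φ x| ≤ (2 * (m : ℝ) - 1) * D := by
  have hne : (List.ofFn fun i => ⁅a i, b i⁆) ≠ [] := by
    simpa using Nat.one_le_iff_ne_zero.mp hm
  have hmem : ∀ c ∈ List.ofFn (fun i => ⁅a i, b i⁆), c ∈ G := by
    simp only [List.mem_ofFn, forall_exists_index, forall_apply_eq_imp_iff]
    exact fun i => Subgroup.commutator_le_right ⊤ G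
      (Subgroup.commutator_mem_commutator (Subgroup.mem_top _) (hb i))
  have hcomm : ∀ c ∈ List.ofFn (fun i => ⁅a i, b i⁆), |φ c| ≤ D := by
    simp only [List.mem_ofFn, forall_exists_index, forall_apply_eq_imp_iff]
    exact fun i => abs_map_commutatorElement_le hq hhom hinv (a i) (hb i)
  have := abs_map_list_prod_le hq hne hmem hcomm
  rw [List.length_ofFn] at this
  rw [hx]
  linarith
end

section
/- Let Ĝ be a group, G a normal subgroup, and φ a Ĝ-invariant homogeneous quasimorphism on G. Then for every x in the subgroup [Ĝ,G] (generated by (Ĝ,G)-commutators), scl_{Ĝ,G}(x) ≥ |φ(x)| / (2·D(φ)), provided D(φ) > 0. -/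
open scoped commutatorElement

/-- The `(Ĝ,G)`-commutator length: the least number of `(Ĝ,G)`-commutators whose
product is `x`. -/
noncomputable def clHG {Ghat : Type*} [Group Ghat] (G : Subgroup Ghat) (x : Ghat) : ℕ :=
  sInf {m | ∃ a b : Fin m → Ghat, (∀ i, b i ∈ G) ∧
    x = (List.ofFn fun i => ⁅a i, b i⁆).prod}

private lemma comm_inv_eq {Ghat : Type*} [Group Ghat] (a b : Ghat) :
    ⁅a, b⁆⁻¹ = ⁅a⁻¹, a * b * a⁻¹⁆ := by
  simp only [commutatorElement_def]
  group

private lemma mem_of_pairs {Ghat : Type*} [Group Ghat] (G : Subgroup Ghat) [G.Normal]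
    (y : Ghat) (hy : y ∈ ⁅(⊤ : Subgroup Ghat), G⁆) :
    ∃ l : List (Ghat × Ghat), (∀ p ∈ l, p.2 ∈ G) ∧
      y = (l.map fun p => ⁅p.1, p.2⁆).prod := by
  have hy' := hy
  rw [Subgroup.commutator_def] at hy'
  clear hy
  induction hy' using Subgroup.closure_induction with
  | mem z hz =>
    obtain ⟨a, -, b, hb, rfl⟩ := hz
    exact ⟨[(a, b)], by simpa using hb, by simp⟩
  | one => exact ⟨[], by simp, by simp⟩
  | mul z w _ _ hz hw =>
    obtain ⟨l₁, h₁, rfl⟩ := hz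
    obtain ⟨l₂, h₂, rfl⟩ := hw
    refine ⟨l₁ ++ l₂, ?_, by simp⟩
    intro p hp
    rcases List.mem_append.mp hp with h | h
    · exact h₁ p h
    · exact h₂ p h
  | inv z _ hz =>
    obtain ⟨l, hl, rfl⟩ := hz
    refine ⟨(l.map fun p => (p.1⁻¹, p.1 * p.2 * p.1⁻¹)).reverse, ?_, ?_⟩
    · intro p hp
      simp only [List.mem_reverse, List.mem_map] at hp
      obtain ⟨q, hq, rfl⟩ := hp
      exact Subgroup.Normal.conj_mem ‹G.Normal› _ (hl q hq) _
    · rw [List.prod_inv_reverse, List.map_reverse, List.map_map, List.map_map]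
      exact congrArg List.prod (congrArg List.reverse
        (List.map_congr_left fun (p : Ghat × Ghat) _ => comm_inv_eq p.1 p.2))

private lemma phi_prod_bound {Ghat : Type*} [Group Ghat] (G : Subgroup Ghat) [G.Normal]
    (φ : Ghat → ℝ) (D : ℝ) (hD : 0 < D)
    (hq : ∀ g h : Ghat, g ∈ G → h ∈ G → |φ (g * h) - φ g - φ h| ≤ D)
    (hhom : ∀ g ∈ G, ∀ n : ℤ, φ (g ^ n) = n * φ g)
    (hinv : ∀ (a : Ghat), ∀ g ∈ G, φ (a * g * a⁻¹) = φ g) :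
    ∀ l : List (Ghat × Ghat), (∀ p ∈ l, p.2 ∈ G) →
      (l.map fun p => ⁅p.1, p.2⁆).prod ∈ G ∧
        |φ (l.map fun p => ⁅p.1, p.2⁆).prod| ≤ 2 * l.length * D := by
  have hone : φ 1 = 0 := by
    have := hhom 1 (one_mem G) 0
    simpa using this
  have hcomm : ∀ a b : Ghat, b ∈ G → ⁅a, b⁆ ∈ G ∧ |φ ⁅a, b⁆| ≤ D := by
    intro a b hb
    have h1 : a * b * a⁻¹ ∈ G := Subgroup.Normal.conj_mem ‹G.Normal› _ hb _
    have h2 : b⁻¹ ∈ G := inv_mem hb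
    have hco : ⁅a, b⁆ = (a * b * a⁻¹) * b⁻¹ := by
      simp [commutatorElement_def, mul_assoc]
    constructor
    · rw [hco]; exact mul_mem h1 h2
    · have hφ1 : φ (a * b * a⁻¹) = φ b := hinv a b hb
      have hφ2 : φ b⁻¹ = -φ b := by
        have := hhom b hb (-1)
        simpa using this
      have := hq _ _ h1 h2
      rw [← hco, hφ1, hφ2] at this
      simpa using this
  intro l hl
  induction l with
  | nil => simpa [hone, hD.le] using one_mem G
  | cons p l ih =>
    have hp := hcomm p.1 p.2 (hl p List.mem_cons_self)
    have ih' := ih (fun q hq' => hl q (List.mem_cons_of_mem p hq'))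
    simp only [List.map_cons, List.prod_cons]
    constructor
    · exact mul_mem hp.1 ih'.1
    · have hq' := hq _ _ hp.1 ih'.1
      have : |φ (⁅p.1, p.2⁆ * (l.map fun p => ⁅p.1, p.2⁆).prod)| ≤
          |φ ⁅p.1, p.2⁆| + |φ (l.map fun p => ⁅p.1, p.2⁆).prod| + D := by
        have h := abs_add_le (φ (⁅p.1, p.2⁆ * (l.map fun p => ⁅p.1, p.2⁆).prod)
            - φ ⁅p.1, p.2⁆ - φ (l.map fun p => ⁅p.1, p.2⁆).prod)
            (φ ⁅p.1, p.2⁆ + φ (l.map fun p => ⁅p.1, p.2⁆).prod)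
        calc |φ (⁅p.1, p.2⁆ * (l.map fun p => ⁅p.1, p.2⁆).prod)|
            ≤ |φ (⁅p.1, p.2⁆ * (l.map fun p => ⁅p.1, p.2⁆).prod)
              - φ ⁅p.1, p.2⁆ - φ (l.map fun p => ⁅p.1, p.2⁆).prod|
              + |φ ⁅p.1, p.2⁆ + φ (l.map fun p => ⁅p.1, p.2⁆).prod| := by
                have := h; ring_nf at this ⊢; linarith [h, abs_add_le (φ ⁅p.1, p.2⁆) (φ (l.map fun p => ⁅p.1, p.2⁆).prod)]
          _ ≤ D + (|φ ⁅p.1, p.2⁆| + |φ (l.map fun p => ⁅p.1, p.2⁆).prod|) :=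
              add_le_add hq' (abs_add_le _ _)
          _ = |φ ⁅p.1, p.2⁆| + |φ (l.map fun p => ⁅p.1, p.2⁆).prod| + D := by ring
      have hlen : (l.length + 1 : ℝ) = l.length + 1 := by push_cast; ring
      calc |φ (⁅p.1, p.2⁆ * (l.map fun p => ⁅p.1, p.2⁆).prod)|
          ≤ |φ ⁅p.1, p.2⁆| + |φ (l.map fun p => ⁅p.1, p.2⁆).prod| + D := this
        _ ≤ D + 2 * l.length * D + D := by linarith [hp.2, ih'.2]
        _ ≤ 2 * (l.length + 1 : ℕ) * D := by push_cast; nlinarith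
        _ = 2 * (p :: l).length * D := by simp

/-- Lower bound for the stable `(Ĝ,G)`-commutator length coming from a `Ĝ`-invariant
homogeneous quasimorphism. -/
theorem scl_ge_of_invariant_quasimorphism
    {Ghat : Type*} [Group Ghat] (G : Subgroup Ghat) [G.Normal]
    (φ : Ghat → ℝ) (D : ℝ) (hD : 0 < D)
    (hq : ∀ g h : Ghat, g ∈ G → h ∈ G → |φ (g * h) - φ g - φ h| ≤ D)
    (hhom : ∀ g ∈ G, ∀ n : ℤ, φ (g ^ n) = n * φ g)
    (hinv : ∀ (a : Ghat), ∀ g ∈ G, φ (a * g * a⁻¹) = φ g)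
    (x : Ghat) (hx : x ∈ ⁅(⊤ : Subgroup Ghat), G⁆)
    (s : ℝ)
    (hs : Filter.Tendsto (fun n : ℕ => (clHG G (x ^ n) : ℝ) / n) Filter.atTop (nhds s)) :
    |φ x| / (2 * D) ≤ s := by
  have hle : ⁅(⊤ : Subgroup Ghat), G⁆ ≤ G := by
    rw [Subgroup.commutator_le]
    intro a _ b hb
    have : ⁅a, b⁆ = (a * b * a⁻¹) * b⁻¹ := by simp [commutatorElement_def, mul_assoc]
    rw [this]
    exact mul_mem (Subgroup.Normal.conj_mem ‹G.Normal› _ hb _) (inv_mem hb)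
  have hxG : x ∈ G := hle hx
  -- key bound: for every n ≥ 1, |φ x| / (2*D) ≤ clHG G (x^n) / n
  have key : ∀ n : ℕ, 1 ≤ n → |φ x| / (2 * D) ≤ (clHG G (x ^ n) : ℝ) / n := by
    intro n hn
    have hxn : x ^ n ∈ ⁅(⊤ : Subgroup Ghat), G⁆ := pow_mem hx n
    obtain ⟨l, hl, hprod⟩ := mem_of_pairs G (x ^ n) hxn
    -- the defining set is nonempty
    have hne : {m | ∃ a b : Fin m → Ghat, (∀ i, b i ∈ G) ∧
        x ^ n = (List.ofFn fun i => ⁅a i, b i⁆).prod}.Nonempty := by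
      refine ⟨l.length, fun i => (l.get i).1, fun i => (l.get i).2, fun i => hl _ (l.get_mem i), ?_⟩
      rw [hprod]
      congr 1
      rw [← List.ofFn_get l, List.map_ofFn, List.ofFn_get]
      rfl
    have hmem := Nat.sInf_mem hne
    obtain ⟨a, b, hb, heq⟩ := hmem
    set m := clHG G (x ^ n) with hm
    -- bound |φ (x^n)| ≤ 2 m D
    have hlist : ∀ p ∈ (List.ofFn fun i => (a i, b i)), p.2 ∈ G := by
      intro p hp
      rw [List.mem_ofFn] at hp
      obtain ⟨i, rfl⟩ := hp
      exact hb i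
    have hbound := (phi_prod_bound G φ D hD hq hhom hinv
      (List.ofFn fun i => (a i, b i)) hlist).2
    rw [List.map_ofFn] at hbound
    have hxn' : |φ (x ^ n)| ≤ 2 * m * D := by
      rw [heq]
      simpa [Function.comp_def, hm, clHG] using hbound
    have hφn : φ (x ^ n) = n * φ x := by
      have := hhom x hxG (n : ℤ)
      rw [zpow_natCast] at this
      rw [this]; push_cast; ring
    have habs : (n : ℝ) * |φ x| ≤ 2 * m * D := by
      rw [hφn, abs_mul, abs_of_nonneg (by positivity : (0:ℝ) ≤ (n:ℝ))] at hxn'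
      exact hxn'
    have hnpos : (0:ℝ) < n := by exact_mod_cast hn
    rw [div_le_div_iff₀ (by positivity) hnpos]
    nlinarith
  have hev : ∀ᶠ n : ℕ in Filter.atTop, |φ x| / (2 * D) ≤ (clHG G (x ^ n) : ℝ) / n :=
    Filter.eventually_atTop.2 ⟨1, key⟩
  exact ge_of_tendsto hs hev
end

section
/- Let G be a normal subgroup of a group Ĝ, let q : Ĝ → Ĝ/G be the quotient map, and suppose there is a group homomorphism s : Ĝ/G → Ĝ with q ∘ s = id. Let φ be a Ĝ-invariant homogeneous quasimorphism on G with defect D(φ). Define φ′ : Ĝ → ℝ by φ′(ĝ) = φ(s(q(ĝ))⁻¹ · ĝ). Then φ′ is a quasimorphism on Ĝ with defect at most D(φ), and φ′ restricted to G equals φ. -/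
/-!
Since `s` is a homomorphism, `s(q(ab)) = s(q a) s(q b)`, so the `G`-part `(s(q(ab)))⁻¹ ab` of `ab`
is the product of a conjugate of the `G`-part of `a` with the `G`-part of `b`. Conjugation
invariance of `φ` turns the defect of `φ′` at `(a, b)` into a defect of `φ` on `G`.
-/

namespace QuotientGroup

variable {Ĝ : Type*} [Group Ĝ] {G : Subgroup Ĝ} [G.Normal] (s : Ĝ ⧸ G →* Ĝ)

theorem section_inv_mul_mem (hs : ∀ h : Ĝ ⧸ G, (mk (s h) : Ĝ ⧸ G) = h) (a : Ĝ) :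
    (s (mk a))⁻¹ * a ∈ G := by
  rw [← eq_one_iff, mk_mul, mk_inv, hs, inv_mul_cancel]

theorem section_inv_mul_mul (a b : Ĝ) :
    (s (mk (a * b)))⁻¹ * (a * b) =
      (s (mk b))⁻¹ * ((s (mk a))⁻¹ * a) * s (mk b) * ((s (mk b))⁻¹ * b) := by
  rw [mk_mul, map_mul]
  group

theorem section_inv_mul_of_mem {g : Ĝ} (hg : g ∈ G) : (s (mk g))⁻¹ * g = g := by
  rw [(eq_one_iff g).mpr hg, map_one, inv_one, one_mul]

end QuotientGroup

theorem abs_conj_mul_sub_le {Ĝ : Type*} [Group Ĝ] {G : Subgroup Ĝ} [G.Normal] {φ : Ĝ → ℝ}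
    {D : ℝ} (hq : ∀ g h : Ĝ, g ∈ G → h ∈ G → |φ (g * h) - φ g - φ h| ≤ D)
    (hinv : ∀ (a : Ĝ), ∀ g ∈ G, φ (a * g * a⁻¹) = φ g) (c : Ĝ) {x y : Ĝ} (hx : x ∈ G)
    (hy : y ∈ G) : |φ (c⁻¹ * x * c * y) - φ x - φ y| ≤ D := by
  have hconj : φ (c⁻¹ * x * c) = φ x := by simpa using hinv c⁻¹ x hx
  have hconj_mem : c⁻¹ * x * c ∈ G := by simpa using Subgroup.Normal.conj_mem ‹_› x hx c⁻¹
  simpa [hconj] using hq _ _ hconj_mem hy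

theorem extension_quasimorphism_of_section_general
    {Ghat : Type*} [Group Ghat] (G : Subgroup Ghat) [G.Normal]
    (s : Ghat ⧸ G →* Ghat)
    (hs : ∀ h : Ghat ⧸ G, (QuotientGroup.mk (s h) : Ghat ⧸ G) = h)
    (φ : Ghat → ℝ) (D : ℝ)
    (hq : ∀ g h : Ghat, g ∈ G → h ∈ G → |φ (g * h) - φ g - φ h| ≤ D)
    (hinv : ∀ (a : Ghat), ∀ g ∈ G, φ (a * g * a⁻¹) = φ g) :
    (∀ a b : Ghat,
        |φ ((s (QuotientGroup.mk (a * b)))⁻¹ * (a * b)) -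
          φ ((s (QuotientGroup.mk a))⁻¹ * a) -
          φ ((s (QuotientGroup.mk b))⁻¹ * b)| ≤ D) ∧
    (∀ g ∈ G, φ ((s (QuotientGroup.mk g))⁻¹ * g) = φ g) := by
  refine ⟨fun a b => ?_, fun g hg => by rw [QuotientGroup.section_inv_mul_of_mem s hg]⟩
  rw [QuotientGroup.section_inv_mul_mul]
  exact abs_conj_mul_sub_le hq hinv _ (QuotientGroup.section_inv_mul_mem s hs a)
    (QuotientGroup.section_inv_mul_mem s hs b)

/-- Given a section homomorphism of the quotient map, a `Ĝ`-invariant homogeneous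
quasimorphism `φ` on `G` extends to a quasimorphism `φ′` on `Ĝ` with `D(φ′) ≤ D(φ)`,
where `φ′(ĝ) = φ(s(q(ĝ))⁻¹ ĝ)`. -/
theorem extension_quasimorphism_of_section
    {Ghat : Type*} [Group Ghat] (G : Subgroup Ghat) [G.Normal]
    (s : Ghat ⧸ G →* Ghat)
    (hs : ∀ h : Ghat ⧸ G, (QuotientGroup.mk (s h) : Ghat ⧸ G) = h)
    (φ : Ghat → ℝ) (D : ℝ)
    (hq : ∀ g h : Ghat, g ∈ G → h ∈ G → |φ (g * h) - φ g - φ h| ≤ D)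
    (hhom : ∀ g ∈ G, ∀ n : ℤ, φ (g ^ n) = n * φ g)
    (hinv : ∀ (a : Ghat), ∀ g ∈ G, φ (a * g * a⁻¹) = φ g) :
    (∀ a b : Ghat,
        |φ ((s (QuotientGroup.mk (a * b)))⁻¹ * (a * b)) -
          φ ((s (QuotientGroup.mk a))⁻¹ * a) -
          φ ((s (QuotientGroup.mk b))⁻¹ * b)| ≤ D) ∧
    (∀ g ∈ G, φ ((s (QuotientGroup.mk g))⁻¹ * g) = φ g) :=
  extension_quasimorphism_of_section_general G s hs φ D hq hinv
end

section
/- Let G be a normal subgroup of a group Ĝ with a section homomorphism s : Ĝ/G → Ĝ of the quotient map. Then every Ĝ-invariant homogeneous quasimorphism φ on G extends to a homogeneous quasimorphism φ̂ on Ĝ with φ̂|_G = φ and D(φ̂) ≤ 2·D(φ). -/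
open Filter Topology

namespace QMExt
variable {Γ : Type*} [Group Γ] {ψ : Γ → ℝ} {D : ℝ}

lemma D_nonneg (hψ : ∀ a b : Γ, |ψ (a * b) - ψ a - ψ b| ≤ D) : 0 ≤ D := by
  have h := hψ 1 1
  rw [one_mul, show ψ (1:Γ) - ψ 1 - ψ 1 = -(ψ 1) by ring, abs_neg] at h
  exact le_trans (abs_nonneg _) h

/-- `|ψ (x^(n+1)) - (n+1) ψ x| ≤ n D` -/
lemma pow_est (hψ : ∀ a b : Γ, |ψ (a * b) - ψ a - ψ b| ≤ D) (x : Γ) :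
    ∀ n : ℕ, |ψ (x ^ (n + 1)) - (n + 1 : ℝ) * ψ x| ≤ n * D := by
  intro n
  induction n with
  | zero => simp
  | succ n ih =>
    have h := hψ (x ^ (n + 1)) x
    rw [← pow_succ] at h
    rw [abs_le] at *
    push_cast at *
    constructor <;> nlinarith [D_nonneg hψ]

lemma mul_est (hψ : ∀ a b : Γ, |ψ (a * b) - ψ a - ψ b| ≤ D) (x : Γ) (m n : ℕ) (hn : 1 ≤ n) :
    |ψ (x ^ (m * n)) - (n : ℝ) * ψ (x ^ m)| ≤ n * D := by
  cases n with
  | zero => omega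
  | succ k =>
    have h := pow_est hψ (x ^ m) k
    rw [← pow_mul] at h
    have hD := D_nonneg hψ
    rw [abs_le] at *
    push_cast at *
    constructor <;> nlinarith

lemma key_est (hψ : ∀ a b : Γ, |ψ (a * b) - ψ a - ψ b| ≤ D) (x : Γ) (m n : ℕ)
    (hm : 1 ≤ m) (hn : 1 ≤ n) :
    |ψ (x ^ m) / m - ψ (x ^ n) / n| ≤ D / m + D / n := by
  have hm' : (0:ℝ) < m := by exact_mod_cast hm
  have hn' : (0:ℝ) < n := by exact_mod_cast hn
  have A := mul_est hψ x m n hn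
  have B := mul_est hψ x n m hm
  rw [mul_comm n m] at B
  have eq : ψ (x ^ m) / m - ψ (x ^ n) / n
      = ((n : ℝ) * ψ (x ^ m) - (m : ℝ) * ψ (x ^ n)) / (m * n) := by
    field_simp
  rw [eq, abs_div, abs_of_pos (mul_pos hm' hn'), div_le_iff₀ (mul_pos hm' hn')]
  have tri : |(n : ℝ) * ψ (x ^ m) - (m : ℝ) * ψ (x ^ n)|
      ≤ n * D + m * D := by
    have := abs_sub (ψ (x ^ (m * n)) - (n : ℝ) * ψ (x ^ m)) (ψ (x ^ (m * n)) - (m : ℝ) * ψ (x ^ n))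
    rw [abs_le] at *
    constructor <;> linarith
  calc |(n : ℝ) * ψ (x ^ m) - (m : ℝ) * ψ (x ^ n)| ≤ n * D + m * D := tri
    _ = (D / m + D / n) * (m * n) := by field_simp

lemma cauchy (hψ : ∀ a b : Γ, |ψ (a * b) - ψ a - ψ b| ≤ D) (x : Γ) :
    CauchySeq (fun n : ℕ => ψ (x ^ n) / n) := by
  have hD := D_nonneg hψ
  rw [Metric.cauchySeq_iff']
  intro ε hε
  obtain ⟨N0, hN0⟩ := exists_nat_gt (2 * D / ε)
  refine ⟨N0 + 1, fun n hn => ?_⟩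
  have hN1 : 1 ≤ N0 + 1 := Nat.le_add_left 1 N0
  have hn1 : 1 ≤ n := le_trans hN1 hn
  have hNpos : (0:ℝ) < (N0 + 1 : ℕ) := by exact_mod_cast hN1
  have hnN : ((N0 + 1 : ℕ) : ℝ) ≤ (n : ℝ) := by exact_mod_cast hn
  rw [Real.dist_eq]
  calc |ψ (x ^ n) / n - ψ (x ^ (N0 + 1)) / (N0 + 1 : ℕ)|
      ≤ D / n + D / (N0 + 1 : ℕ) := key_est hψ x n (N0 + 1) hn1 hN1
    _ ≤ D / (N0 + 1 : ℕ) + D / (N0 + 1 : ℕ) := by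
        gcongr
    _ = 2 * D / (N0 + 1 : ℕ) := by ring
    _ < ε := by
        rw [div_lt_iff₀ hNpos]
        have : 2 * D / ε < ((N0 + 1 : ℕ) : ℝ) := lt_of_lt_of_le hN0 (by push_cast; linarith)
        rw [div_lt_iff₀ hε] at this
        linarith

variable (ψ) in
noncomputable def L (x : Γ) : ℝ := limUnder atTop (fun n : ℕ => ψ (x ^ n) / n)

lemma tendsto_L (hψ : ∀ a b : Γ, |ψ (a * b) - ψ a - ψ b| ≤ D) (x : Γ) :
    Tendsto (fun n : ℕ => ψ (x ^ n) / n) atTop (𝓝 (L ψ x)) :=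
  (cauchy hψ x).tendsto_limUnder

lemma psi_one (hψ : ∀ a b : Γ, |ψ (a * b) - ψ a - ψ b| ≤ D) : |ψ (1 : Γ)| ≤ D := by
  have h := hψ 1 1
  rw [one_mul, show ψ (1:Γ) - ψ 1 - ψ 1 = -(ψ 1) by ring, abs_neg] at h
  exact h

lemma L_one (hψ : ∀ a b : Γ, |ψ (a * b) - ψ a - ψ b| ≤ D) : L ψ (1 : Γ) = 0 := by
  refine tendsto_nhds_unique (tendsto_L hψ 1) ?_
  simpa using tendsto_const_div_atTop_nhds_zero_nat (ψ (1 : Γ))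

lemma psi_close (hψ : ∀ a b : Γ, |ψ (a * b) - ψ a - ψ b| ≤ D) (x : Γ) :
    |ψ x - L ψ x| ≤ D := by
  rw [abs_sub_comm]
  refine le_of_tendsto ((tendsto_L hψ x).sub_const (ψ x)).abs ?_
  filter_upwards [eventually_ge_atTop 1] with n hn
  cases n with
  | zero => omega
  | succ k =>
    have h := pow_est hψ x k
    have hk : (0:ℝ) < (k:ℝ) + 1 := by positivity
    have hD := D_nonneg hψ
    have heq : ψ (x ^ (k+1)) / ((k+1:ℕ):ℝ) - ψ x
        = (ψ (x ^ (k+1)) - ((k:ℝ)+1) * ψ x) / ((k:ℝ)+1) := by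
      push_cast; field_simp
    show |ψ (x ^ (k+1)) / ((k+1:ℕ):ℝ) - ψ x| ≤ D
    rw [heq, abs_div, abs_of_pos hk, div_le_iff₀ hk]
    calc |ψ (x ^ (k+1)) - ((k:ℝ)+1) * ψ x| ≤ k * D := h
      _ ≤ D * ((k:ℝ)+1) := by nlinarith

lemma L_conj (hψ : ∀ a b : Γ, |ψ (a * b) - ψ a - ψ b| ≤ D) (a x : Γ) :
    L ψ (a * x * a⁻¹) = L ψ x := by
  refine tendsto_nhds_unique (tendsto_L hψ _) ?_
  have hsq : Tendsto (fun n : ℕ => ψ ((a * x * a⁻¹) ^ n) / n - ψ (x ^ n) / n)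
      atTop (𝓝 0) := by
    refine squeeze_zero_norm (fun n => ?_)
      (tendsto_const_div_atTop_nhds_zero_nat (2 * D + |ψ a| + |ψ a⁻¹|))
    cases n with
    | zero => simp
    | succ k =>
      have hn : (0:ℝ) < ((k+1:ℕ):ℝ) := by positivity
      have h1 := hψ a (x ^ (k+1) * a⁻¹)
      have h2 := hψ (x ^ (k+1)) a⁻¹
      rw [← mul_assoc] at h1
      have hcp : (a * x * a⁻¹) ^ (k+1) = a * x ^ (k+1) * a⁻¹ := by
        rw [conj_pow]
      rw [Real.norm_eq_abs, hcp, div_sub_div_same, abs_div, abs_of_pos hn,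
        div_le_div_iff_of_pos_right hn]
      have la := le_abs_self (ψ a); have na := neg_abs_le (ψ a)
      have lb := le_abs_self (ψ a⁻¹); have nb := neg_abs_le (ψ a⁻¹)
      rw [abs_le] at h1 h2 ⊢
      constructor <;> linarith
  have := hsq.add (tendsto_L hψ x)
  simpa using this

lemma L_pow_nat (hψ : ∀ a b : Γ, |ψ (a * b) - ψ a - ψ b| ≤ D) (x : Γ) (k : ℕ) :
    L ψ (x ^ k) = k * L ψ x := by
  rcases Nat.eq_zero_or_pos k with rfl | hk
  · simpa using L_one hψ
  refine tendsto_nhds_unique (tendsto_L hψ (x ^ k)) ?_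
  have hcomp : Tendsto (fun n : ℕ => ψ (x ^ (k * n)) / ((k * n : ℕ) : ℝ))
      atTop (𝓝 (L ψ x)) := by
    refine (tendsto_L hψ x).comp ?_
    exact tendsto_atTop_atTop.mpr fun b =>
      ⟨b, fun a ha => le_trans ha (Nat.le_mul_of_pos_left a hk)⟩
  have := hcomp.const_mul (k : ℝ)
  refine Tendsto.congr (fun n => ?_) this
  rcases Nat.eq_zero_or_pos n with rfl | hn
  · simp
  · have hn' : ((n:ℕ):ℝ) ≠ 0 := by positivity
    have hk' : ((k:ℕ):ℝ) ≠ 0 := by positivity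
    rw [pow_mul]
    push_cast
    field_simp

lemma L_inv (hψ : ∀ a b : Γ, |ψ (a * b) - ψ a - ψ b| ≤ D) (x : Γ) :
    L ψ x⁻¹ = - L ψ x := by
  refine tendsto_nhds_unique (tendsto_L hψ x⁻¹) ?_
  have hsq : Tendsto (fun n : ℕ => ψ ((x⁻¹) ^ n) / n + ψ (x ^ n) / n)
      atTop (𝓝 0) := by
    refine squeeze_zero_norm (fun n => ?_)
      (tendsto_const_div_atTop_nhds_zero_nat (D + |ψ (1:Γ)|))
    cases n with
    | zero => simp
    | succ k =>
      have hn : (0:ℝ) < ((k+1:ℕ):ℝ) := by positivity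
      have h1 := hψ (x ^ (k+1)) ((x ^ (k+1))⁻¹)
      rw [mul_inv_cancel] at h1
      have l1 := le_abs_self (ψ (1:Γ)); have n1 := neg_abs_le (ψ (1:Γ))
      rw [Real.norm_eq_abs, inv_pow, ← add_div, abs_div, abs_of_pos hn,
        div_le_div_iff_of_pos_right hn]
      rw [abs_le] at h1 ⊢
      constructor <;> linarith
  have := hsq.sub (tendsto_L hψ x)
  simpa using this

lemma L_zpow (hψ : ∀ a b : Γ, |ψ (a * b) - ψ a - ψ b| ≤ D) (x : Γ) (n : ℤ) :
    L ψ (x ^ n) = n * L ψ x := by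
  cases n with
  | ofNat m => rw [Int.ofNat_eq_coe, zpow_natCast, L_pow_nat hψ]; push_cast; ring
  | negSucc m =>
      rw [zpow_negSucc, ← inv_pow, L_pow_nat hψ, L_inv hψ]
      push_cast
      ring

def conjProd (g h : Γ) : ℕ → Γ
  | 0 => 1
  | n + 1 => conjProd g h n * (g ^ (n+1) * h * (g ^ (n+1))⁻¹)

lemma conjProd_spec (g h : Γ) : ∀ n : ℕ, (g * h) ^ n = conjProd g h n * g ^ n := by
  intro n
  induction n with
  | zero => simp [conjProd]
  | succ n ih =>
    rw [pow_succ, ih, conjProd]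
    group

lemma conjProd_est (hψ : ∀ a b : Γ, |ψ (a * b) - ψ a - ψ b| ≤ D) (g h : Γ) :
    ∀ n : ℕ, |ψ (conjProd g h n) - n * L ψ h| ≤ (2 * n + 1) * D := by
  intro n
  induction n with
  | zero => simpa [conjProd] using psi_one hψ
  | succ n ih =>
    have h1 := hψ (conjProd g h n) (g ^ (n+1) * h * (g ^ (n+1))⁻¹)
    have h2 := psi_close hψ (g ^ (n+1) * h * (g ^ (n+1))⁻¹)
    rw [L_conj hψ] at h2
    show |ψ (conjProd g h n * (g ^ (n+1) * h * (g ^ (n+1))⁻¹)) - _| ≤ _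
    rw [abs_le] at *
    push_cast
    constructor <;> linarith [ih.1, ih.2, h1.1, h1.2, h2.1, h2.2]

lemma L_defect (hψ : ∀ a b : Γ, |ψ (a * b) - ψ a - ψ b| ≤ D) (g h : Γ) :
    |L ψ (g * h) - L ψ g - L ψ h| ≤ 2 * D := by
  have hD := D_nonneg hψ
  have htend : Tendsto (fun n : ℕ => |ψ ((g*h) ^ n) / n - ψ (g ^ n) / n - L ψ h|)
      atTop (𝓝 |L ψ (g*h) - L ψ g - L ψ h|) :=
    (((tendsto_L hψ (g*h)).sub (tendsto_L hψ g)).sub_const (L ψ h)).abs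
  have hbd : Tendsto (fun n : ℕ => 2 * D + (3 * D) / n) atTop (𝓝 (2 * D)) := by
    have := (tendsto_const_div_atTop_nhds_zero_nat (3 * D)).const_add (2 * D)
    simpa using this
  refine le_of_tendsto_of_tendsto htend hbd ?_
  filter_upwards [eventually_ge_atTop 1] with n hn
  have hn' : (0:ℝ) < (n:ℝ) := by exact_mod_cast hn
  have h1 := hψ (conjProd g h n) (g ^ n)
  rw [← conjProd_spec] at h1
  have h2 := conjProd_est hψ g h n
  have heq : ψ ((g*h) ^ n) / n - ψ (g ^ n) / n - L ψ h
      = (ψ ((g*h) ^ n) - ψ (g ^ n) - n * L ψ h) / n := by field_simp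
  rw [heq, abs_div, abs_of_pos hn', div_le_iff₀ hn']
  have key : |ψ ((g*h) ^ n) - ψ (g ^ n) - (n:ℝ) * L ψ h| ≤ (2 * n + 2) * D := by
    rw [abs_le] at *
    constructor <;> linarith [h1.1, h1.2, h2.1, h2.2]
  calc |ψ ((g*h) ^ n) - ψ (g ^ n) - (n:ℝ) * L ψ h| ≤ (2 * n + 2) * D := key
    _ ≤ (2 * D + 3 * D / n) * n := by
        have hrw : (2 * D + 3 * D / (n:ℝ)) * n = 2 * D * n + 3 * D := by
          field_simp
        rw [hrw]; nlinarith

end QMExt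

/-- Given a section homomorphism of the quotient map, every `Ĝ`-invariant homogeneous
quasimorphism on `G` extends to a homogeneous quasimorphism on `Ĝ` with at most twice
the defect. -/
theorem extension_homogeneous_quasimorphism_of_section
    {Ghat : Type*} [Group Ghat] (G : Subgroup Ghat) [G.Normal]
    (s : Ghat ⧸ G →* Ghat)
    (hs : ∀ h : Ghat ⧸ G, (QuotientGroup.mk (s h) : Ghat ⧸ G) = h)
    (φ : Ghat → ℝ) (D : ℝ)
    (hq : ∀ g h : Ghat, g ∈ G → h ∈ G → |φ (g * h) - φ g - φ h| ≤ D)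
    (hhom : ∀ g ∈ G, ∀ n : ℤ, φ (g ^ n) = n * φ g)
    (hinv : ∀ (a : Ghat), ∀ g ∈ G, φ (a * g * a⁻¹) = φ g) :
    ∃ φhat : Ghat → ℝ,
      (∀ g ∈ G, φhat g = φ g) ∧
      (∀ (a : Ghat) (n : ℤ), φhat (a ^ n) = n * φhat a) ∧
      (∀ a b : Ghat, |φhat (a * b) - φhat a - φhat b| ≤ 2 * D) := by
  classical
  set ψ : Ghat → ℝ := fun a => φ (a * (s (QuotientGroup.mk a))⁻¹) with hψdef
  have hmem : ∀ a : Ghat, a * (s (QuotientGroup.mk a))⁻¹ ∈ G := by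
    intro a
    rw [← QuotientGroup.eq_one_iff]
    rw [QuotientGroup.mk_mul, QuotientGroup.mk_inv, hs]
    exact mul_inv_cancel _
  have hψG : ∀ g ∈ G, ψ g = φ g := by
    intro g hg
    have h1 : (QuotientGroup.mk g : Ghat ⧸ G) = 1 := (QuotientGroup.eq_one_iff g).mpr hg
    simp [hψdef, h1]
  have hQ : ∀ a b : Ghat, |ψ (a * b) - ψ a - ψ b| ≤ D := by
    intro a b
    have hab : s (QuotientGroup.mk (a * b)) =
        s (QuotientGroup.mk a) * s (QuotientGroup.mk b) := by
      rw [show (QuotientGroup.mk (a * b) : Ghat ⧸ G)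
          = QuotientGroup.mk a * QuotientGroup.mk b from rfl, map_mul]
    set α := s (QuotientGroup.mk a) with hα
    set β := s (QuotientGroup.mk b) with hβ
    have key : a * b * (s (QuotientGroup.mk (a * b)))⁻¹
        = (a * α⁻¹) * (α * (b * β⁻¹) * α⁻¹) := by
      rw [hab]; group
    have hmb : α * (b * β⁻¹) * α⁻¹ ∈ G :=
      Subgroup.Normal.conj_mem ‹G.Normal› _ (hmem b) α
    have h := hq (a * α⁻¹) (α * (b * β⁻¹) * α⁻¹) (hmem a) hmb
    rw [hinv α (b * β⁻¹) (hmem b)] at h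
    show |φ (a * b * (s (QuotientGroup.mk (a * b)))⁻¹) - φ (a * α⁻¹) - φ (b * β⁻¹)| ≤ D
    rw [key]
    exact h
  refine ⟨QMExt.L ψ, ?_, fun a n => QMExt.L_zpow hQ a n, fun a b => QMExt.L_defect hQ a b⟩
  intro g hg
  refine tendsto_nhds_unique (QMExt.tendsto_L hQ g) ?_
  refine tendsto_const_nhds.congr' ?_
  filter_upwards [Filter.eventually_ge_atTop 1] with n hn
  have hn' : ((n:ℕ):ℝ) ≠ 0 := by positivity
  have hgn : g ^ n ∈ G := pow_mem hg n
  have hφn : φ (g ^ n) = (n:ℝ) * φ g := by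
    have h := hhom g hg (n : ℤ)
    rw [zpow_natCast] at h
    push_cast at h
    exact h
  rw [hψG _ hgn, hφn]
  field_simp
end

section
/- Let Ĝ be a group, G a normal subgroup with [Ĝ,G] = G, and suppose there is a section homomorphism s : Ĝ/G → Ĝ of the quotient map. Then for every x ∈ G, scl_Ĝ(x) ≤ scl_{Ĝ,G}(x) ≤ 2·scl_Ĝ(x). -/
open scoped commutatorElement

section Aux

variable {Ghat : Type*} [Group Ghat] (G : Subgroup Ghat)

/-- `x` is a product of at most `k` commutators with second entries in `G`. -/
def ReprHG (k : ℕ) (x : Ghat) : Prop :=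
  ∃ l : List (Ghat × Ghat), (∀ p ∈ l, p.2 ∈ G) ∧ l.length ≤ k ∧
    x = (l.map fun p => ⁅p.1, p.2⁆).prod

variable {G}

lemma reprHG_one : ReprHG G 0 (1 : Ghat) := ⟨[], by simp, by simp, by simp⟩

lemma ReprHG.mono {k k' : ℕ} {x : Ghat} (h : ReprHG G k x) (hk : k ≤ k') :
    ReprHG G k' x := by
  obtain ⟨l, h1, h2, h3⟩ := h
  exact ⟨l, h1, h2.trans hk, h3⟩

lemma ReprHG.mul {k k' : ℕ} {x y : Ghat} (hx : ReprHG G k x) (hy : ReprHG G k' y) :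
    ReprHG G (k + k') (x * y) := by
  obtain ⟨l, h1, h2, rfl⟩ := hx
  obtain ⟨l', h1', h2', rfl⟩ := hy
  refine ⟨l ++ l', ?_, ?_, ?_⟩
  · intro p hp
    rcases List.mem_append.1 hp with h | h
    · exact h1 p h
    · exact h1' p h
  · simpa using Nat.add_le_add h2 h2'
  · simp

lemma reprHG_comm {a b : Ghat} (hb : b ∈ G) : ReprHG G 1 ⁅a, b⁆ :=
  ⟨[(a, b)], by simpa using hb, by simp, by simp⟩

lemma conj_commutator (c a b : Ghat) : c * ⁅a, b⁆ * c⁻¹ = ⁅c * a * c⁻¹, c * b * c⁻¹⁆ := by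
  simp only [commutatorElement_def]; group

lemma conj_list_prod (c : Ghat) (l : List (Ghat × Ghat)) :
    c * (l.map fun p => ⁅p.1, p.2⁆).prod * c⁻¹ =
      ((l.map fun p => (c * p.1 * c⁻¹, c * p.2 * c⁻¹)).map fun p => ⁅p.1, p.2⁆).prod := by
  induction l with
  | nil => simp
  | cons p l ih =>
    simp only [List.map_cons, List.prod_cons]
    rw [← ih, ← conj_commutator]
    group

lemma ReprHG.conj [G.Normal] {k : ℕ} {x : Ghat} (h : ReprHG G k x) (c : Ghat) :
    ReprHG G k (c * x * c⁻¹) := by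
  obtain ⟨l, h1, h2, rfl⟩ := h
  refine ⟨l.map fun p => (c * p.1 * c⁻¹, c * p.2 * c⁻¹), ?_, by simpa, ?_⟩
  · intro p hp
    obtain ⟨q, hq, rfl⟩ := List.mem_map.1 hp
    exact Subgroup.Normal.conj_mem ‹G.Normal› q.2 (h1 q hq) c
  · exact conj_list_prod c l

lemma reprHG_inv_comm [G.Normal] {a b : Ghat} (hb : b ∈ G) : ReprHG G 1 (⁅a, b⁆⁻¹) := by
  have h : ⁅a, b⁆⁻¹ = ⁅a⁻¹, a * b * a⁻¹⁆ := by
    simp only [commutatorElement_def]; group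
  rw [h]
  exact reprHG_comm (Subgroup.Normal.conj_mem ‹G.Normal› b hb a)

lemma ReprHG.inv [G.Normal] {k : ℕ} {x : Ghat} (h : ReprHG G k x) : ReprHG G k x⁻¹ := by
  obtain ⟨l, h1, h2, rfl⟩ := h
  suffices H : ∀ l : List (Ghat × Ghat), (∀ p ∈ l, p.2 ∈ G) →
      ReprHG G l.length ((l.map fun p => ⁅p.1, p.2⁆).prod)⁻¹ from
    (H l h1).mono h2
  intro l
  induction l with
  | nil => intro _; simpa using reprHG_one
  | cons p l ih =>
    intro hmem
    have h1 : ReprHG G l.length ((l.map fun p => ⁅p.1, p.2⁆).prod)⁻¹ :=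
      ih fun q hq => hmem q (List.mem_cons_of_mem _ hq)
    have h2 : ReprHG G 1 (⁅p.1, p.2⁆⁻¹) := reprHG_inv_comm (hmem p List.mem_cons_self)
    have := h1.mul h2
    simp only [List.map_cons, List.prod_cons, mul_inv_rev] at *
    exact this.mono (by simp [Nat.add_comm])

/-- The key algebraic decomposition of a commutator. -/
lemma comm_decomp (a b ra rb : Ghat) :
    ⁅a, b⁆ = (ra * ⁅ra⁻¹ * a, b⁆ * ra⁻¹) * (⁅ra, rb⁆ * ((rb * ⁅ra, rb⁻¹ * b⁆ * rb⁻¹))) := by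
  simp only [commutatorElement_def]; group

/-- Given a retraction-type hom `r` with `(r g)⁻¹ g ∈ G`, any product of `m` commutators
equals (a product of `2m` `(Ĝ,G)`-commutators) times its image under `r`. -/
lemma key_lemma [G.Normal] (r : Ghat →* Ghat) (hr : ∀ g : Ghat, (r g)⁻¹ * g ∈ G) :
    ∀ L : List (Ghat × Ghat),
      ReprHG G (2 * L.length)
        ((L.map fun p => ⁅p.1, p.2⁆).prod * (r ((L.map fun p => ⁅p.1, p.2⁆).prod))⁻¹) := by
  intro L
  induction L with
  | nil => simpa using reprHG_one
  | cons p L ih =>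
    obtain ⟨a, b⟩ := p
    set y := (L.map fun p => ⁅p.1, p.2⁆).prod with hy
    have hu : (r a)⁻¹ * a ∈ G := hr a
    have hv : (r b)⁻¹ * b ∈ G := hr b
    -- K1
    have hK1 : ReprHG G 1 ((r a) * ⁅(r a)⁻¹ * a, b⁆ * (r a)⁻¹) := by
      have : ⁅(r a)⁻¹ * a, b⁆ = ⁅b, (r a)⁻¹ * a⁆⁻¹ := by rw [commutatorElement_inv]
      rw [this]
      exact (reprHG_inv_comm hu).conj (r a)
    -- K2
    have hK2 : ReprHG G 1 ((r b) * ⁅r a, (r b)⁻¹ * b⁆ * (r b)⁻¹) :=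
      (reprHG_comm hv).conj (r b)
    have hmid : ReprHG G (1 + 2 * L.length)
        ((r b) * ⁅r a, (r b)⁻¹ * b⁆ * (r b)⁻¹ * (y * (r y)⁻¹)) := hK2.mul ih
    have hconj : ReprHG G (1 + 2 * L.length)
        (⁅r a, r b⁆ * ((r b) * ⁅r a, (r b)⁻¹ * b⁆ * (r b)⁻¹ * (y * (r y)⁻¹)) * ⁅r a, r b⁆⁻¹) :=
      hmid.conj _
    have htot := hK1.mul hconj
    have heq :
        ((⁅a, b⁆ :: L.map fun p => ⁅p.1, p.2⁆).prod *
          (r ((⁅a, b⁆ :: L.map fun p => ⁅p.1, p.2⁆).prod))⁻¹) =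
        ((r a) * ⁅(r a)⁻¹ * a, b⁆ * (r a)⁻¹) *
          (⁅r a, r b⁆ * ((r b) * ⁅r a, (r b)⁻¹ * b⁆ * (r b)⁻¹ * (y * (r y)⁻¹)) *
            ⁅r a, r b⁆⁻¹) := by
      rw [List.prod_cons, ← hy, map_mul, map_commutatorElement, mul_inv_rev]
      have hd := comm_decomp a b (r a) (r b)
      calc ⁅a, b⁆ * y * ((r y)⁻¹ * ⁅r a, r b⁆⁻¹)
          = (⁅a, b⁆) * (y * (r y)⁻¹) * ⁅r a, r b⁆⁻¹ := by group
        _ = ((r a) * ⁅(r a)⁻¹ * a, b⁆ * (r a)⁻¹) *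
              (⁅r a, r b⁆ * ((r b) * ⁅r a, (r b)⁻¹ * b⁆ * (r b)⁻¹)) *
              (y * (r y)⁻¹) * ⁅r a, r b⁆⁻¹ := by rw [← hd]
        _ = _ := by group
    simp only [List.map_cons]
    rw [heq]
    exact htot.mono (by simp [List.length_cons]; omega)

lemma reprHG_of_mem_set {m : ℕ} {x : Ghat}
    (h : ∃ a b : Fin m → Ghat, (∀ i, b i ∈ G) ∧
      x = (List.ofFn fun i => ⁅a i, b i⁆).prod) : ReprHG G m x := by
  obtain ⟨a, b, hb, hx⟩ := h
  refine ⟨List.ofFn fun i => (a i, b i), ?_, by simp, ?_⟩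
  · intro p hp
    obtain ⟨i, rfl⟩ := List.mem_ofFn.1 hp
    exact hb i
  · rw [List.map_ofFn]
    exact hx

lemma fin_repr_helper (m : ℕ) (l : List (Ghat × Ghat)) (hlen : l.length = m)
    (h1 : ∀ p ∈ l, p.2 ∈ G) :
    ∃ a b : Fin m → Ghat, (∀ i, b i ∈ G) ∧
      (l.map fun p => ⁅p.1, p.2⁆).prod = (List.ofFn fun i => ⁅a i, b i⁆).prod := by
  subst hlen
  refine ⟨fun i => (l.get i).1, fun i => (l.get i).2, fun i => h1 _ (List.get_mem l i), ?_⟩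
  have : (List.ofFn fun i => ⁅(l.get i).1, (l.get i).2⁆) = l.map fun p => ⁅p.1, p.2⁆ := by
    conv_rhs => rw [← List.ofFn_get l, List.map_ofFn]
    rfl
  rw [this]

lemma mem_set_of_reprHG {m : ℕ} {x : Ghat} (h : ReprHG G m x) :
    m ∈ {m | ∃ a b : Fin m → Ghat, (∀ i, b i ∈ G) ∧
      x = (List.ofFn fun i => ⁅a i, b i⁆).prod} := by
  obtain ⟨l, h1, h2, rfl⟩ := h
  set l' := l ++ List.replicate (m - l.length) ((1 : Ghat), (1 : Ghat)) with hl'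
  have hlen : l'.length = m := by simp [hl']; omega
  have h1' : ∀ p ∈ l', p.2 ∈ G := by
    intro p hp
    rcases List.mem_append.1 hp with h | h
    · exact h1 p h
    · rw [List.eq_of_mem_replicate h]; exact one_mem G
  have hprod : (l.map fun p => ⁅p.1, p.2⁆).prod = (l'.map fun p => ⁅p.1, p.2⁆).prod := by
    simp [hl', List.map_replicate]
  obtain ⟨a, b, hb, heq⟩ := fin_repr_helper m l' hlen h1'
  exact ⟨a, b, hb, by rw [hprod, heq]⟩

lemma clHG_le {m : ℕ} {x : Ghat} (h : ReprHG G m x) : clHG G x ≤ m :=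
  Nat.sInf_le (mem_set_of_reprHG h)

lemma ReprHG.to_top {k : ℕ} {x : Ghat} (h : ReprHG G k x) : ReprHG (⊤ : Subgroup Ghat) k x := by
  obtain ⟨l, _, h2, h3⟩ := h
  exact ⟨l, fun p _ => trivial, h2, h3⟩

end Aux

/-- If `[Ĝ,G] = G` and the quotient map admits a section homomorphism, then
`scl_Ĝ ≤ scl_{Ĝ,G} ≤ 2 scl_Ĝ` on `G`. -/
theorem scl_comparison_of_section
    {Ghat : Type*} [Group Ghat] (G : Subgroup Ghat) [G.Normal]
    (hG : ⁅(⊤ : Subgroup Ghat), G⁆ = G)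
    (s : Ghat ⧸ G →* Ghat)
    (hs : ∀ h : Ghat ⧸ G, (QuotientGroup.mk (s h) : Ghat ⧸ G) = h)
    (x : Ghat) (hx : x ∈ G)
    (sG sHG : ℝ)
    (hsG : Filter.Tendsto (fun n : ℕ => (clHG (⊤ : Subgroup Ghat) (x ^ n) : ℝ) / n)
      Filter.atTop (nhds sG))
    (hsHG : Filter.Tendsto (fun n : ℕ => (clHG G (x ^ n) : ℝ) / n)
      Filter.atTop (nhds sHG)) :
    sG ≤ sHG ∧ sHG ≤ 2 * sG := by
  -- every element of G is a product of (Ĝ,G)-commutators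
  have hrep : ∀ z : Ghat, z ∈ G → ∃ k, ReprHG G k z := by
    intro z hz
    rw [← hG, Subgroup.commutator_def] at hz
    refine Subgroup.closure_induction ?_ ⟨0, reprHG_one⟩ ?_ ?_ hz
    · rintro g ⟨g₁, -, g₂, hg₂, rfl⟩
      exact ⟨1, reprHG_comm hg₂⟩
    · rintro g h - - ⟨k, hk⟩ ⟨k', hk'⟩
      exact ⟨k + k', hk.mul hk'⟩
    · rintro g - ⟨k, hk⟩
      exact ⟨k, hk.inv⟩
  -- the retraction r = s ∘ π
  set r : Ghat →* Ghat := s.comp (QuotientGroup.mk' G) with hr_def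
  have hr : ∀ g : Ghat, (r g)⁻¹ * g ∈ G := by
    intro g
    have h2 : (QuotientGroup.mk (r g) : Ghat ⧸ G) = QuotientGroup.mk g := hs _
    exact (QuotientGroup.eq).mp h2
  -- the two pointwise inequalities
  have hle : ∀ n : ℕ, clHG (⊤ : Subgroup Ghat) (x ^ n) ≤ clHG G (x ^ n) := by
    intro n
    obtain ⟨k, hk⟩ := hrep (x ^ n) (pow_mem hx n)
    have hne : {m | ∃ a b : Fin m → Ghat, (∀ i, b i ∈ G) ∧
        x ^ n = (List.ofFn fun i => ⁅a i, b i⁆).prod}.Nonempty := ⟨k, mem_set_of_reprHG hk⟩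
    have hmem := Nat.sInf_mem hne
    exact clHG_le ((reprHG_of_mem_set hmem).to_top)
  have hle2 : ∀ n : ℕ, clHG G (x ^ n) ≤ 2 * clHG (⊤ : Subgroup Ghat) (x ^ n) := by
    intro n
    obtain ⟨k, hk⟩ := hrep (x ^ n) (pow_mem hx n)
    have hne : {m | ∃ a b : Fin m → Ghat, (∀ i, b i ∈ ⊤) ∧
        x ^ n = (List.ofFn fun i => ⁅a i, b i⁆).prod}.Nonempty :=
      ⟨k, mem_set_of_reprHG hk.to_top⟩
    have hmem := Nat.sInf_mem hne
    obtain ⟨l, -, hlen, hx'⟩ := reprHG_of_mem_set (G := (⊤ : Subgroup Ghat)) hmem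
    have hkey := key_lemma (G := G) r hr l
    rw [← hx'] at hkey
    have hrx : r (x ^ n) = 1 := by
      rw [hr_def]
      simp only [MonoidHom.comp_apply]
      have : (QuotientGroup.mk' G) (x ^ n) = 1 := by
        rw [QuotientGroup.mk'_apply, QuotientGroup.eq_one_iff]
        exact pow_mem hx n
      rw [this, map_one]
    rw [hrx] at hkey
    simp only [inv_one, mul_one] at hkey
    exact clHG_le (hkey.mono (Nat.mul_le_mul_left 2 hlen))
  constructor
  · refine le_of_tendsto_of_tendsto' hsG hsHG ?_
    intro n
    have := hle n
    have hn : (0 : ℝ) ≤ ((n : ℝ))⁻¹ := by positivity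
    rw [div_eq_mul_inv, div_eq_mul_inv]
    exact mul_le_mul_of_nonneg_right (by exact_mod_cast this) hn
  · have h2 : Filter.Tendsto (fun n : ℕ => 2 * ((clHG (⊤ : Subgroup Ghat) (x ^ n) : ℝ) / n))
        Filter.atTop (nhds (2 * sG)) := hsG.const_mul 2
    refine le_of_tendsto_of_tendsto' hsHG h2 ?_
    intro n
    have := hle2 n
    have hn : (0 : ℝ) ≤ ((n : ℝ))⁻¹ := by positivity
    rw [div_eq_mul_inv, div_eq_mul_inv, ← mul_assoc]
    exact mul_le_mul_of_nonneg_right (by exact_mod_cast this) hn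
end

section
/- Let ν be a conjugation-invariant norm on a group Ĝ and μ a semi-homogeneous ν-quasimorphism on Ĝ. If f, g ∈ Ĝ satisfy that f g f⁻¹ commutes with g⁻¹ (equivalently, f commutes with g f⁻¹ g⁻¹), then μ([f,g]) = 0. -/
/-!
Semi-homogeneity turns every bounded error into zero: if `n * a` stays within a bounded distance
of a fixed number for all `n`, then `a = 0`. Since the defect `μ (f * g) - μ f - μ g` is bounded
as soon as one factor is fixed, comparing `μ (h * x ^ n * h⁻¹)` with `μ (x ^ n)` shows that `μ` is
conjugation invariant. When `f g f⁻¹` commutes with `g⁻¹`, the powers of the commutator are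
`⁅f, g⁆ ^ n = f * (g ^ n * f⁻¹ * (g ^ n)⁻¹)`, a fixed element times a conjugate of `f⁻¹`, so
`n * μ ⁅f, g⁆` stays within a bounded distance of `μ f⁻¹`.
-/

open scoped commutatorElement

lemma eq_zero_of_forall_abs_nat_mul_sub_le {a b B : ℝ} (h : ∀ n : ℕ, |n * a - b| ≤ B) :
    a = 0 := by
  by_contra ha
  obtain ⟨n, hn⟩ := exists_nat_gt ((B + |b|) / |a|)
  rw [div_lt_iff₀ (abs_pos.2 ha)] at hn
  have hna : |(n : ℝ) * a| ≤ B + |b| := by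
    simpa using (abs_sub_abs_le_abs_sub _ _).trans (h n)
  rw [abs_mul, Nat.abs_cast] at hna
  linarith

lemma commutatorElement_pow_of_commute {G : Type*} [Group G] {f g : G}
    (h : Commute (f * g * f⁻¹) g⁻¹) (n : ℕ) :
    ⁅f, g⁆ ^ n = f * (g ^ n * f⁻¹ * (g ^ n)⁻¹) := by
  rw [commutatorElement_def, h.mul_pow, conj_pow, inv_pow]
  group

section Quasimorphism

variable {G : Type*} [Group G] {ν μ : G → ℝ} {C : ℝ}

lemma abs_map_mul_sub_map_right_le (hC : 0 ≤ C)
    (hq : ∀ f g : G, |μ (f * g) - μ f - μ g| ≤ C * min (ν f) (ν g)) (h x : G) :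
    |μ (h * x) - μ x| ≤ C * ν h + |μ h| := calc
  |μ (h * x) - μ x| = |(μ (h * x) - μ h - μ x) + μ h| := by ring_nf
  _ ≤ |μ (h * x) - μ h - μ x| + |μ h| := abs_add_le _ _
  _ ≤ C * ν h + |μ h| := by
    gcongr
    exact (hq h x).trans (mul_le_mul_of_nonneg_left (min_le_left _ _) hC)

lemma abs_map_mul_sub_map_left_le (hC : 0 ≤ C)
    (hq : ∀ f g : G, |μ (f * g) - μ f - μ g| ≤ C * min (ν f) (ν g)) (h x : G) :
    |μ (x * h) - μ x| ≤ C * ν h + |μ h| := calc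
  |μ (x * h) - μ x| = |(μ (x * h) - μ x - μ h) + μ h| := by ring_nf
  _ ≤ |μ (x * h) - μ x - μ h| + |μ h| := abs_add_le _ _
  _ ≤ C * ν h + |μ h| := by
    gcongr
    exact (hq x h).trans (mul_le_mul_of_nonneg_left (min_le_right _ _) hC)

lemma map_conj_eq_of_semihomogeneous (hC : 0 ≤ C)
    (hq : ∀ f g : G, |μ (f * g) - μ f - μ g| ≤ C * min (ν f) (ν g))
    (hsemi : ∀ (f : G) (n : ℕ), μ (f ^ n) = n * μ f) (h x : G) :
    μ (h * x * h⁻¹) = μ x := by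
  suffices μ (h * x * h⁻¹) - μ x = 0 by linarith
  refine eq_zero_of_forall_abs_nat_mul_sub_le (b := 0)
    (B := (C * ν h + |μ h|) + (C * ν h⁻¹ + |μ h⁻¹|)) fun n ↦ ?_
  have hpow : (n : ℝ) * (μ (h * x * h⁻¹) - μ x) =
      (μ (h * (x ^ n * h⁻¹)) - μ (x ^ n * h⁻¹)) + (μ (x ^ n * h⁻¹) - μ (x ^ n)) := by
    rw [← mul_assoc, ← conj_pow, hsemi, hsemi]
    ring
  rw [sub_zero, hpow]
  exact (abs_add_le _ _).trans (add_le_add (abs_map_mul_sub_map_right_le hC hq _ _)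
    (abs_map_mul_sub_map_left_le hC hq _ _))

end Quasimorphism

theorem semihomogeneous_nu_quasimorphism_vanishes_on_commutator_general
    {G : Type*} [Group G] (ν : G → ℝ)
    (μ : G → ℝ) (C : ℝ) (hC : 0 < C)
    (hq : ∀ f g : G, |μ (f * g) - μ f - μ g| ≤ C * min (ν f) (ν g))
    (hsemi : ∀ (f : G) (n : ℕ), μ (f ^ n) = n * μ f)
    (f g : G)
    (hcomm : (f * g * f⁻¹) * g⁻¹ = g⁻¹ * (f * g * f⁻¹)) :
    μ ⁅f, g⁆ = 0 := by
  refine eq_zero_of_forall_abs_nat_mul_sub_le (b := μ f⁻¹) (B := C * ν f + |μ f|) fun n ↦ ?_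
  have hconj : μ (g ^ n * f⁻¹ * (g ^ n)⁻¹) = μ f⁻¹ :=
    map_conj_eq_of_semihomogeneous hC.le hq hsemi _ _
  rw [← hsemi, commutatorElement_pow_of_commute hcomm, ← hconj]
  exact abs_map_mul_sub_map_right_le hC.le hq _ _

/-- A semi-homogeneous `ν`-quasimorphism vanishes on `[f,g]` when `f g f⁻¹` commutes
with `g⁻¹`. -/
theorem semihomogeneous_nu_quasimorphism_vanishes_on_commutator
    {G : Type*} [Group G] (ν : G → ℝ)
    (hν1 : ν 1 = 0)
    (hνinv : ∀ f : G, ν f = ν f⁻¹)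
    (hνsub : ∀ f g : G, ν (f * g) ≤ ν f + ν g)
    (hνconj : ∀ f g : G, ν (g * f * g⁻¹) = ν f)
    (hνpos : ∀ f : G, f ≠ 1 → 0 < ν f)
    (μ : G → ℝ) (C : ℝ) (hC : 0 < C)
    (hq : ∀ f g : G, |μ (f * g) - μ f - μ g| ≤ C * min (ν f) (ν g))
    (hsemi : ∀ (f : G) (n : ℕ), μ (f ^ n) = n * μ f)
    (f g : G)
    (hcomm : (f * g * f⁻¹) * g⁻¹ = g⁻¹ * (f * g * f⁻¹)) :
    μ ⁅f, g⁆ = 0 :=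
  semihomogeneous_nu_quasimorphism_vanishes_on_commutator_general ν μ C hC hq hsemi f g hcomm
end

section
/- For a group G, the sequence 0 → H¹(G;ℝ) → Q(G) →^δ H²_b(G;ℝ) →^c H²(G;ℝ) is exact, where Q(G) is the space of homogeneous quasimorphisms, δ sends φ to the class of its coboundary (g,h) ↦ φ(g) + φ(h) − φ(gh), and c is the comparison map. In particular, a homogeneous quasimorphism φ is a homomorphism if and only if δ(φ) = 0. -/
/-!
Exactness at `Q(G)`: if `δφ = δb` with `b` bounded, then `φ - b` is a homomorphism, hence
homogeneous; two homogeneous functions at bounded distance coincide (their difference is bounded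
and homogeneous), so `φ = φ - b`. Exactness at `H²_b(G;ℝ)`: if a bounded cocycle is `δu`, then `u`
is a quasimorphism of some defect `D`. Since `n ↦ u (gⁿ) + D` is subadditive, Fekete's lemma gives
the homogenization `φ g = lim u (gⁿ) / n`, a homogeneous quasimorphism with `|u - φ| ≤ D`, and
`δu = δφ + δ(u - φ)` with `u - φ` bounded.
-/

/-- Inhomogeneous group 2-cocycle condition (real coefficients, trivial action). -/
def IsCocycle2 {K : Type*} [Group K] (c : K → K → ℝ) : Prop :=
  ∀ g h k : K, c h k - c (g * h) k + c g (h * k) - c g h = 0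

open Filter Topology

theorem eq_zero_of_forall_abs_natCast_mul_le {x B : ℝ} (h : ∀ n : ℕ, |n * x| ≤ B) : x = 0 := by
  by_contra hx
  obtain ⟨n, hn⟩ := exists_nat_gt (B / |x|)
  have := h n
  rw [abs_mul, Nat.abs_cast] at this
  exact (lt_irrefl B) (((div_lt_iff₀ (abs_pos.mpr hx)).mp hn).trans_le this)

section Monoid
variable {M : Type*} [Monoid M]

theorem map_pow_of_map_mul {ψ : M → ℝ} (hψ : ∀ g h, ψ (g * h) = ψ g + ψ h) (g : M) (n : ℕ) :
    ψ (g ^ n) = n * ψ g := by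
  induction n with
  | zero => simpa using hψ 1 1
  | succ n ih => rw [pow_succ, hψ, ih]; push_cast; ring

theorem eq_of_abs_sub_le_of_map_pow {φ ψ : M → ℝ} {B : ℝ}
    (hφ : ∀ (g : M) (n : ℕ), φ (g ^ n) = n * φ g) (hψ : ∀ (g : M) (n : ℕ), ψ (g ^ n) = n * ψ g)
    (h : ∀ g, |φ g - ψ g| ≤ B) : φ = ψ := by
  funext g
  refine sub_eq_zero.mp (eq_zero_of_forall_abs_natCast_mul_le (B := B) fun n => ?_)
  simpa only [hφ, hψ, mul_sub] using h (g ^ n)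

end Monoid

theorem abs_map_mul_sub_le_of_abs_sub_le {G : Type*} [Mul G] {u φ : G → ℝ} {D B : ℝ}
    (hu : ∀ g h, |u (g * h) - u g - u h| ≤ D) (hφ : ∀ g, |u g - φ g| ≤ B) (g h : G) :
    |φ (g * h) - φ g - φ h| ≤ D + 3 * B := by
  have := hu g h
  have := hφ g
  have := hφ h
  have := hφ (g * h)
  rw [abs_le] at *
  constructor <;> linarith

namespace Quasimorphism

noncomputable def homogenization {G : Type*} [Monoid G] (u : G → ℝ) (g : G) : ℝ :=
  limUnder atTop fun n : ℕ => u (g ^ n) / n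

variable {G : Type*} [Group G] {u : G → ℝ} {D : ℝ}

theorem subadditive_map_pow_add (hu : ∀ g h : G, |u (g * h) - u g - u h| ≤ D) (g : G) :
    Subadditive fun n => u (g ^ n) + D := by
  intro m n
  have := hu (g ^ m) (g ^ n)
  rw [← pow_add, abs_le] at this
  dsimp only
  linarith

theorem natCast_mul_sub_le_map_pow (hu : ∀ g h : G, |u (g * h) - u g - u h| ≤ D) (g : G) (n : ℕ) :
    n * (u g - D) ≤ u (g ^ n) + D := by
  induction n with
  | zero =>
    have := (abs_le.mp (hu 1 1)).2
    rw [mul_one] at this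
    simp only [CharP.cast_eq_zero, zero_mul, pow_zero]
    linarith
  | succ n ih =>
    have := (abs_le.mp (hu (g ^ n) g)).1
    rw [pow_succ]
    push_cast
    linarith

theorem sub_le_map_pow_add_div (hu : ∀ g h : G, |u (g * h) - u g - u h| ≤ D) (g : G) {n : ℕ}
    (hn : n ≠ 0) : u g - D ≤ (u (g ^ n) + D) / n := by
  rw [le_div_iff₀ (by positivity), mul_comm]
  exact natCast_mul_sub_le_map_pow hu g n

theorem bddBelow_map_pow_add_div (hu : ∀ g h : G, |u (g * h) - u g - u h| ≤ D) (g : G) :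
    BddBelow (Set.range fun n : ℕ => (u (g ^ n) + D) / n) := by
  refine ⟨min (u g - D) 0, ?_⟩
  rintro _ ⟨n, rfl⟩
  rcases eq_or_ne n 0 with rfl | hn
  · simp
  · exact (min_le_left _ _).trans (sub_le_map_pow_add_div hu g hn)

theorem tendsto_map_pow_div (hu : ∀ g h : G, |u (g * h) - u g - u h| ≤ D) (g : G) :
    Tendsto (fun n : ℕ => u (g ^ n) / n) atTop (𝓝 (subadditive_map_pow_add hu g).lim) := by
  simpa [add_div] using ((subadditive_map_pow_add hu g).tendsto_lim
    (bddBelow_map_pow_add_div hu g)).sub (tendsto_const_div_atTop_nhds_zero_nat D)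

theorem homogenization_eq_lim (hu : ∀ g h : G, |u (g * h) - u g - u h| ≤ D) (g : G) :
    homogenization u g = (subadditive_map_pow_add hu g).lim :=
  (tendsto_map_pow_div hu g).limUnder_eq

theorem tendsto_homogenization (hu : ∀ g h : G, |u (g * h) - u g - u h| ≤ D) (g : G) :
    Tendsto (fun n : ℕ => u (g ^ n) / n) atTop (𝓝 (homogenization u g)) :=
  homogenization_eq_lim hu g ▸ tendsto_map_pow_div hu g

theorem abs_sub_homogenization_le (hu : ∀ g h : G, |u (g * h) - u g - u h| ≤ D) (g : G) :
    |u g - homogenization u g| ≤ D := by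
  have hsub := subadditive_map_pow_add hu g
  have hbdd := bddBelow_map_pow_add_div hu g
  have hupper : hsub.lim ≤ (u (g ^ 1) + D) / (1 : ℕ) := hsub.lim_le_div hbdd one_ne_zero
  have hlower : u g - D ≤ hsub.lim := ge_of_tendsto (hsub.tendsto_lim hbdd) <|
    (eventually_ne_atTop 0).mono fun _ hn => sub_le_map_pow_add_div hu g hn
  rw [pow_one, Nat.cast_one, div_one] at hupper
  rw [homogenization_eq_lim hu, abs_le]
  constructor <;> linarith

theorem homogenization_pow (hu : ∀ g h : G, |u (g * h) - u g - u h| ≤ D) (g : G) (k : ℕ) :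
    homogenization u (g ^ k) = k * homogenization u g := by
  rcases eq_or_ne k 0 with rfl | hk
  · simpa [homogenization] using (tendsto_const_div_atTop_nhds_zero_nat (u 1)).limUnder_eq
  refine Tendsto.limUnder_eq ((((tendsto_homogenization hu g).comp
    (tendsto_id.nsmul_atTop hk.bot_lt)).const_mul (k : ℝ)).congr fun n => ?_)
  rw [Function.comp_apply, id, smul_eq_mul, pow_mul, Nat.cast_mul, ← mul_div_assoc,
    mul_div_mul_left _ _ (Nat.cast_ne_zero.mpr hk)]

/-- `g ↦ -φ g⁻¹` is homogeneous and within `4D` of the homogeneous `φ`, hence equal to it. -/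
theorem homogenization_inv (hu : ∀ g h : G, |u (g * h) - u g - u h| ≤ D) (g : G) :
    homogenization u g⁻¹ = -homogenization u g := by
  have hone : homogenization u 1 = 0 := by simpa using homogenization_pow hu 1 0
  have hinv_pow (g : G) (n : ℕ) : -homogenization u (g ^ n)⁻¹ = n * -homogenization u g⁻¹ := by
    rw [← inv_pow, homogenization_pow hu, mul_neg]
  have hbdd (g : G) : |-homogenization u g⁻¹ - homogenization u g| ≤ D + 3 * D := by
    simpa [hone, sub_eq_add_neg, add_comm] using
      abs_map_mul_sub_le_of_abs_sub_le hu (abs_sub_homogenization_le hu) g g⁻¹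
  exact neg_eq_iff_eq_neg.mp
    (congrFun (eq_of_abs_sub_le_of_map_pow hinv_pow (homogenization_pow hu) hbdd) g)

theorem homogenization_zpow (hu : ∀ g h : G, |u (g * h) - u g - u h| ≤ D) (g : G) (n : ℤ) :
    homogenization u (g ^ n) = n * homogenization u g := by
  cases n with
  | ofNat n => simpa using homogenization_pow hu g n
  | negSucc n =>
    rw [zpow_negSucc, homogenization_inv hu, homogenization_pow hu, Int.cast_negSucc]
    push_cast
    ring

end Quasimorphism

/-- Exactness of `0 → H¹(G;ℝ) → Q(G) → H²_b(G;ℝ) → H²(G;ℝ)`, stated at the level of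
cochains: (1) exactness at `Q(G)`: a homogeneous quasimorphism `φ` has `δφ` a bounded
coboundary iff `φ` is a homomorphism; (2) exactness at `H²_b(G;ℝ)`: a bounded 2-cocycle
is a coboundary (of a possibly unbounded function) iff it equals `δφ` for a homogeneous
quasimorphism `φ` up to a bounded coboundary. -/
theorem exactness_H1_Q_H2b_H2 {G : Type*} [Group G] :
    (∀ φ : G → ℝ, (∃ D : ℝ, ∀ g h : G, |φ (g * h) - φ g - φ h| ≤ D) →
      (∀ (g : G) (n : ℤ), φ (g ^ n) = n * φ g) →
      ((∃ b : G → ℝ, (∃ B : ℝ, ∀ g : G, |b g| ≤ B) ∧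
          ∀ g h : G, φ g + φ h - φ (g * h) = b g + b h - b (g * h)) ↔
        ∀ g h : G, φ (g * h) = φ g + φ h)) ∧
    (∀ c : G → G → ℝ, (∃ B : ℝ, ∀ g h : G, |c g h| ≤ B) → IsCocycle2 c →
      ((∃ u : G → ℝ, ∀ g h : G, c g h = u g + u h - u (g * h)) ↔
        ∃ φ : G → ℝ,
          ((∃ D : ℝ, ∀ g h : G, |φ (g * h) - φ g - φ h| ≤ D) ∧
            ∀ (g : G) (n : ℤ), φ (g ^ n) = n * φ g) ∧
          ∃ b : G → ℝ, (∃ B : ℝ, ∀ g : G, |b g| ≤ B) ∧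
            ∀ g h : G, c g h =
              (φ g + φ h - φ (g * h)) + (b g + b h - b (g * h)))) := by
  refine ⟨fun φ _ hφ => ⟨?_, fun hmul => ⟨0, ⟨0, by simp⟩, fun g h => by simp [hmul]⟩⟩,
    fun c ⟨B, hc⟩ _ => ⟨?_, ?_⟩⟩
  · rintro ⟨b, ⟨B, hb⟩, hδ⟩
    have hψ (g h : G) : (φ - b) (g * h) = (φ - b) g + (φ - b) h := by
      simp only [Pi.sub_apply]; linarith [hδ g h]
    have hφ_pow (g : G) (n : ℕ) : φ (g ^ n) = n * φ g := by simpa using hφ g n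
    have hφb : φ = φ - b :=
      eq_of_abs_sub_le_of_map_pow hφ_pow (map_pow_of_map_mul hψ) fun g => by simpa using hb g
    intro g h
    rw [hφb]
    exact hψ g h
  · rintro ⟨u, hδu⟩
    have hu (g h : G) : |u (g * h) - u g - u h| ≤ B := by
      simpa only [hδu, ← abs_neg (u g + u h - _), neg_sub, sub_sub] using hc g h
    refine ⟨Quasimorphism.homogenization u, ⟨⟨B + 3 * B, abs_map_mul_sub_le_of_abs_sub_le hu
      (Quasimorphism.abs_sub_homogenization_le hu)⟩, Quasimorphism.homogenization_zpow hu⟩,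
      fun g => u g - Quasimorphism.homogenization u g,
      ⟨B, Quasimorphism.abs_sub_homogenization_le hu⟩,
      fun g h => by rw [hδu]; ring⟩
  · rintro ⟨φ, -, b, -, hδ⟩
    exact ⟨φ + b, fun g h => by simp only [Pi.add_apply]; rw [hδ]; ring⟩
end
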